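/- If f : A ⊢ B is a term, then every propositional letter has an even number of occurrences in the sequent A ⊢ B (counting occurrences in A plus occurrences in B). -/

import Mathlib

/-- Prime α-formulae: a propositional letter, or an implication between α-formulae.
α-formulae are formulae with `⊗` strictly associative and `I` a strict unit; hence an
α-formula is faithfully represented as the list of its prime factors: the empty list
is the constant `I` and `⊗` is concatenation of lists. -/
inductive PForm : Type
  | atom : ℕ → PForm
  | imp : List PForm → List PForm → PForm

/-- α-formulae. -/
abbrev AForm : Type := List PForm

mutual
  /-- The number of occurrences of the letter `p` in a prime α-formula. -/
  def PForm.occ (p : ℕ) : PForm → ℕ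
    | .atom q => if q = p then 1 else 0
    | .imp A B => AForm.occ p A + AForm.occ p B
  /-- The number of occurrences of the letter `p` in an α-formula. -/
  def AForm.occ (p : ℕ) : List PForm → ℕ
    | [] => 0
    | x :: xs => PForm.occ p x + AForm.occ p xs
end

/-- Terms (with types `f : A ⊢ B`) of the language coding `IL`-derivations: the
primitive terms are `1_A`, `c_{A,B} : A⊗B ⊢ B⊗A`, `η_{A,B} : B ⊢ A→(A⊗B)` and
`ε_{A,B} : A⊗(A→B) ⊢ B`; terms are closed under composition, tensor and `A→‐`. -/
inductive ILTerm : AForm → AForm → Type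
  | id (A : AForm) : ILTerm A A
  | c (A B : AForm) : ILTerm (A ++ B) (B ++ A)
  | eta (A B : AForm) : ILTerm B [PForm.imp A (A ++ B)]
  | eps (A B : AForm) : ILTerm (A ++ [PForm.imp A B]) B
  | comp {A B C : AForm} : ILTerm B C → ILTerm A B → ILTerm A C
  | tens {A₁ B₁ A₂ B₂ : AForm} : ILTerm A₁ B₁ → ILTerm A₂ B₂ → ILTerm (A₁ ++ A₂) (B₁ ++ B₂)
  | imp (A : AForm) {B₁ B₂ : AForm} : ILTerm B₁ B₂ → ILTerm [PForm.imp A B₁] [PForm.imp A B₂]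

/-- Transport a term along (propositional) equalities of its source and its target. -/
def ILTerm.recast {A A' B B' : AForm} (hA : A = A') (hB : B = B') (f : ILTerm A B) :
    ILTerm A' B' := by subst hA; subst hB; exact f

/-!
The number of occurrences of a letter is additive under `⊗` and under `→`, so only its parity
matters. In each primitive term every subformula occurs once on each side or twice on one side;
composition counts the middle formula twice, and tensor and `A → -` add even counts.
-/

@[simp]
theorem AForm.occ_append (p : ℕ) (A B : AForm) :
    AForm.occ p (A ++ B) = AForm.occ p A + AForm.occ p B := by
  induction A with
  | nil => simp only [List.nil_append, AForm.occ, zero_add]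
  | cons x xs ih => simp only [List.cons_append, AForm.occ, ih, add_assoc]

@[simp]
theorem AForm.occ_imp (p : ℕ) (A B : AForm) :
    AForm.occ p [PForm.imp A B] = AForm.occ p A + AForm.occ p B := by
  simp only [AForm.occ, PForm.occ, add_zero]

/-- If `f : A ⊢ B` is a term, then every propositional letter has an even number of
occurrences in the sequent `A ⊢ B`. -/
theorem even_occurrences {A B : AForm} (f : ILTerm A B) (p : ℕ) :
    Even (AForm.occ p A + AForm.occ p B) := by
  induction f with
  | id A => exact Even.add_self _
  | c A B => simp only [AForm.occ_append, Nat.even_add]; tauto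
  | eta A B => simp only [AForm.occ_append, AForm.occ_imp, Nat.even_add]; tauto
  | eps A B => simp only [AForm.occ_append, AForm.occ_imp, Nat.even_add]; tauto
  | comp _ _ hg hf => rw [Nat.even_add] at *; exact hf.trans hg
  | tens _ _ h₁ h₂ => simp only [AForm.occ_append, Nat.even_add] at *; tauto
  | imp A _ h => simp only [AForm.occ_imp, Nat.even_add] at *; tauto
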